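/- arXiv:2207.04576 — 3 statements merged into one kernel-verified Lean document; each statement's English description precedes it below -/
import Mathlib

section
/- Let k be a field, n a natural number, V an n-dimensional k-vector space with basis (v_1,…,v_n), and M a k-vector space. For indices i,j let E_{ij} ∈ End_k(V) be the endomorphism with E_{ij}(v_j) = v_i and E_{ij}(v_l) = 0 for l ≠ j. Given a k-linear map μ : End_k(V) → End_k(M), define the k-linear map a : V⊗M → V⊗M by a(v_i ⊗ x) = Σ_{j=1}^n v_j ⊗ μ(E_{ij})(x). Then μ(XY − YX) = μ(X)μ(Y) − μ(Y)μ(X) holds for all X,Y ∈ End_k(V) (i.e., μ is a representation of the Lie algebra gl(V)) if and only if a satisfies the curried gl identity. -/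
/-!
Write `A i j = μ (E i j)`. Evaluated on `vᵢ ⊗ vⱼ ⊗ x` and expanded in the basis `v_q ⊗ v_l` of
`V ⊗ V`, the curried gl identity says exactly `[A i q, A j l] = δ_qj A i l - δ_li A j q`. Since
`E i q E j l = δ_qj E i l`, this is `μ [E i q, E j l] = [μ (E i q), μ (E j l)]`. As the `E i j` form a basis of `End V` and
`(X, Y) ↦ μ [X, Y] - [μ X, μ Y]` is bilinear, this is the same as `μ` preserving all commutators.
-/

open TensorProduct

/-- The braiding of the first two factors of `V ⊗ V ⊗ M` (tensored with `id` on `M`). -/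
noncomputable def glTau (k V M : Type) [CommRing k] [AddCommGroup V] [Module k V]
    [AddCommGroup M] [Module k M] :
    V ⊗[k] (V ⊗[k] M) →ₗ[k] V ⊗[k] (V ⊗[k] M) :=
  (TensorProduct.assoc k V V M).toLinearMap ∘ₗ
    LinearMap.rTensor M (TensorProduct.comm k V V).toLinearMap ∘ₗ
    (TensorProduct.assoc k V V M).symm.toLinearMap

/-- The curried gl identity for a map `a : V ⊗ M → V ⊗ M`:
with `τ` the braiding of the two `V`-factors of `V ⊗ V ⊗ M`, `a₂ = id_V ⊗ a` and
`a₁ = τ ∘ a₂ ∘ τ`, it reads `a₁ ∘ a₂ - a₂ ∘ a₁ = τ ∘ (a₁ - a₂)`. -/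
def CurriedGlIdentity (k V M : Type) [CommRing k] [AddCommGroup V] [Module k V]
    [AddCommGroup M] [Module k M] (a : V ⊗[k] M →ₗ[k] V ⊗[k] M) : Prop :=
  let τ : V ⊗[k] (V ⊗[k] M) →ₗ[k] V ⊗[k] (V ⊗[k] M) := glTau k V M
  let a₂ : V ⊗[k] (V ⊗[k] M) →ₗ[k] V ⊗[k] (V ⊗[k] M) := LinearMap.lTensor V a
  let a₁ : V ⊗[k] (V ⊗[k] M) →ₗ[k] V ⊗[k] (V ⊗[k] M) := τ ∘ₗ a₂ ∘ₗ τ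
  a₁ ∘ₗ a₂ - a₂ ∘ₗ a₁ = τ ∘ₗ (a₁ - a₂)

theorem LinearMap.map_commutator_iff_of_basis {k A B ι : Type*} [CommRing k] [Ring A]
    [Algebra k A] [Ring B] [Algebra k B] (b : Module.Basis ι k A) (μ : A →ₗ[k] B) :
    (∀ x y, μ (x * y - y * x) = μ x * μ y - μ y * μ x) ↔
      ∀ i j, μ (b i * b j - b j * b i) = μ (b i) * μ (b j) - μ (b j) * μ (b i) := by
  refine ⟨fun h i j => h _ _, fun h x y => ?_⟩
  have := LinearMap.ext_basis (B := (LinearMap.mul k A - (LinearMap.mul k A).flip).compr₂ μ)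
    (B' := (LinearMap.mul k B - (LinearMap.mul k B).flip).compl₁₂ μ μ) b b (by simpa using h)
  simpa using congr($this x y)

theorem Module.Basis.end_eq_smulRight {k V ι : Type*} [CommRing k] [AddCommGroup V]
    [Module k V] [Fintype ι] [DecidableEq ι] (v : Module.Basis ι k V) (i j : ι) :
    v.end (i, j) = (v.coord j).smulRight (v i) :=
  v.ext fun r => by by_cases h : j = r <;> simp [Module.Basis.end_apply_apply, h]

theorem Module.Basis.end_comp_end {k V ι : Type*} [CommRing k] [AddCommGroup V] [Module k V]
    [Fintype ι] [DecidableEq ι] (v : Module.Basis ι k V) (i q j l : ι) :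
    v.end (i, q) ∘ₗ v.end (j, l) = if q = j then v.end (i, l) else 0 := by
  refine v.ext fun r => ?_
  split_ifs with h <;> by_cases hr : l = r <;> simp [Module.Basis.end_apply_apply, h, hr]

theorem Module.Basis.end_commutator {k V ι : Type*} [CommRing k] [AddCommGroup V] [Module k V]
    [Fintype ι] [DecidableEq ι] (v : Module.Basis ι k V) (i q j l : ι) :
    v.end (i, q) * v.end (j, l) - v.end (j, l) * v.end (i, q) =
      (if q = j then v.end (i, l) else 0) - (if l = i then v.end (j, q) else 0) := by
  rw [Module.End.mul_eq_comp, Module.End.mul_eq_comp, v.end_comp_end, v.end_comp_end]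

theorem sum_basis_tmul_injective {k V N ι : Type*} [CommRing k] [AddCommGroup V] [Module k V]
    [AddCommGroup N] [Module k N] [Fintype ι] (v : Module.Basis ι k V) :
    Function.Injective (fun m : ι → N => ∑ i, v i ⊗ₜ[k] m i) := by
  classical
  intro m m' h
  funext q
  simpa [TensorProduct.equivFinsuppOfBasisLeft_apply_tmul_apply, Finsupp.single_apply] using
    congr(TensorProduct.equivFinsuppOfBasisLeft v $h q)

theorem sum_basis_tmul_sum_basis_tmul_inj {k V N ι : Type*} [CommRing k] [AddCommGroup V]
    [Module k V] [AddCommGroup N] [Module k N] [Fintype ι] (v : Module.Basis ι k V)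
    {m m' : ι → ι → N} :
    ∑ q, ∑ l, v q ⊗ₜ[k] (v l ⊗ₜ[k] m q l) = ∑ q, ∑ l, v q ⊗ₜ[k] (v l ⊗ₜ[k] m' q l) ↔ m = m' := by
  simp only [← TensorProduct.tmul_sum]
  refine ⟨fun h => ?_, fun h => h ▸ rfl⟩
  funext q
  exact sum_basis_tmul_injective v (congr_fun (sum_basis_tmul_injective v h) q)

theorem ext_basis_tmul_tmul {k V N P ι : Type*} [CommRing k] [AddCommGroup V] [Module k V]
    [AddCommGroup N] [Module k N] [AddCommGroup P] [Module k P] (v : Module.Basis ι k V)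
    {f g : V ⊗[k] (V ⊗[k] N) →ₗ[k] P}
    (h : ∀ i j x, f (v i ⊗ₜ (v j ⊗ₜ x)) = g (v i ⊗ₜ (v j ⊗ₜ x))) : f = g :=
  TensorProduct.ext <| v.ext fun i =>
    TensorProduct.ext <| v.ext fun j => LinearMap.ext fun x => h i j x

theorem glTau_tmul {k V M : Type} [CommRing k] [AddCommGroup V] [Module k V]
    [AddCommGroup M] [Module k M] (x y : V) (m : M) :
    glTau k V M (x ⊗ₜ (y ⊗ₜ m)) = y ⊗ₜ (x ⊗ₜ m) := by
  simp [glTau]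

theorem curriedGlIdentity_iff {k V M ι : Type} [CommRing k] [AddCommGroup V] [Module k V]
    [AddCommGroup M] [Module k M] [Fintype ι] [DecidableEq ι] (v : Module.Basis ι k V)
    (A : ι → ι → Module.End k M) (a : V ⊗[k] M →ₗ[k] V ⊗[k] M)
    (ha : ∀ i x, a (v i ⊗ₜ x) = ∑ j, v j ⊗ₜ A i j x) :
    CurriedGlIdentity k V M a ↔
      ∀ i q j l, A i q * A j l - A j l * A i q =
        (if q = j then A i l else 0) - (if l = i then A j q else 0) := by
  dsimp only [CurriedGlIdentity]
  set τ := glTau k V M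
  set a₂ := LinearMap.lTensor V a
  set a₁ := τ ∘ₗ a₂ ∘ₗ τ
  have ha₂ (y : V) (j : ι) (x : M) : a₂ (y ⊗ₜ (v j ⊗ₜ x)) = ∑ l, y ⊗ₜ (v l ⊗ₜ A j l x) := by
    rw [LinearMap.lTensor_tmul, ha, tmul_sum]
  have ha₁ (i : ι) (y : V) (x : M) : a₁ (v i ⊗ₜ (y ⊗ₜ x)) = ∑ q, v q ⊗ₜ (y ⊗ₜ A i q x) := by
    simp only [a₁, LinearMap.comp_apply, τ, glTau_tmul, ha₂, map_sum]
  have hlhs (i j : ι) (x : M) : (a₁ ∘ₗ a₂ - a₂ ∘ₗ a₁) (v i ⊗ₜ (v j ⊗ₜ x)) =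
      ∑ q, ∑ l, v q ⊗ₜ (v l ⊗ₜ (A i q * A j l - A j l * A i q) x) := by
    simp only [LinearMap.sub_apply, LinearMap.comp_apply, ha₁, ha₂, map_sum,
      Module.End.mul_apply, tmul_sub, Finset.sum_sub_distrib]
    rw [Finset.sum_comm (γ := ι) (f := fun l q => v q ⊗ₜ (v l ⊗ₜ A i q (A j l x)))]
  have hrhs (i j : ι) (x : M) : (τ ∘ₗ (a₁ - a₂)) (v i ⊗ₜ (v j ⊗ₜ x)) =
      ∑ q, ∑ l,
        v q ⊗ₜ (v l ⊗ₜ ((if q = j then A i l else 0) - (if l = i then A j q else 0)) x) := by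
    simp only [LinearMap.sub_apply, LinearMap.comp_apply, ha₁, ha₂, map_sum, map_sub, τ,
      glTau_tmul, apply_ite (fun f : Module.End k M => f x), LinearMap.zero_apply, tmul_sub,
      tmul_ite, Finset.sum_sub_distrib]
    rw [Finset.sum_comm (γ := ι) (f := fun q l => if q = j then _ else 0)]
    simp only [Finset.sum_ite_eq', Finset.mem_univ, if_true]
  calc a₁ ∘ₗ a₂ - a₂ ∘ₗ a₁ = τ ∘ₗ (a₁ - a₂)
      ↔ ∀ i j x, (a₁ ∘ₗ a₂ - a₂ ∘ₗ a₁) (v i ⊗ₜ (v j ⊗ₜ x)) =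
          (τ ∘ₗ (a₁ - a₂)) (v i ⊗ₜ (v j ⊗ₜ x)) :=
        ⟨fun h i j x => congr($h _), ext_basis_tmul_tmul v⟩
    _ ↔ ∀ i j x q l, (A i q * A j l - A j l * A i q) x =
        ((if q = j then A i l else 0) - (if l = i then A j q else 0)) x := by
      simp only [hlhs, hrhs, sum_basis_tmul_sum_basis_tmul_inj, funext_iff]
    _ ↔ _ := ⟨fun h i q j l => LinearMap.ext fun x => h i j x q l,
        fun h i j x q l => congr($(h i q j l) x)⟩

/-- Let `V` be an `n`-dimensional `k`-vector space with basis `v`, and `M` a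
`k`-vector space. For a linear map `μ : End(V) → End(M)`, let
`a : V ⊗ M → V ⊗ M` be the linear map with `a (vᵢ ⊗ x) = ∑ⱼ vⱼ ⊗ μ(Eᵢⱼ) x`, where
`Eᵢⱼ ∈ End(V)` is the endomorphism with `Eᵢⱼ vⱼ = vᵢ` and `Eᵢⱼ vₗ = 0` for `l ≠ j`.
Then `μ` is a representation of the Lie algebra `gl(V)`
(i.e. `μ(XY - YX) = μ(X)μ(Y) - μ(Y)μ(X)` for all `X, Y`) if and only if `a` satisfies
the curried gl identity. -/
theorem statement0 (k : Type) [Field k] (n : ℕ) (V M : Type) [AddCommGroup V] [Module k V]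
    [AddCommGroup M] [Module k M] (v : Module.Basis (Fin n) k V)
    (μ : (V →ₗ[k] V) →ₗ[k] (M →ₗ[k] M))
    (E : Fin n → Fin n → (V →ₗ[k] V))
    (hE : ∀ i j, E i j = (v.coord j).smulRight (v i))
    (a : V ⊗[k] M →ₗ[k] V ⊗[k] M)
    (ha : ∀ (i : Fin n) (x : M), a ((v i) ⊗ₜ[k] x) = ∑ j : Fin n, (v j) ⊗ₜ[k] (μ (E i j)) x) :
    (∀ X Y : V →ₗ[k] V, μ (X ∘ₗ Y - Y ∘ₗ X) = μ X ∘ₗ μ Y - μ Y ∘ₗ μ X) ↔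
      CurriedGlIdentity k V M a := by
  obtain rfl : E = fun i j => v.end (i, j) :=
    funext₂ fun i j => (hE i j).trans (v.end_eq_smulRight i j).symm
  simp only [← Module.End.mul_eq_comp]
  rw [LinearMap.map_commutator_iff_of_basis v.end μ, curriedGlIdentity_iff v _ a ha]
  simp only [Prod.forall]
  refine forall₄_congr fun i q j l => ?_
  rw [v.end_commutator, map_sub, apply_ite μ, apply_ite μ, map_zero, eq_comm]
end

section
/- Let R be a (not necessarily commutative) ring and let x, y ∈ R satisfy y·x = x·y + 1. Then for all natural numbers r and s: y^r · x^s = Σ_{e=0}^{min(r,s)} C(r,e)·C(s,e)·e! · x^{s−e} · y^{r−e}, where C(·,·) denotes binomial coefficients and the coefficients act as integer multiples. -/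
private lemma key9 {R : Type} [Ring R] (x y : R) (h : y * x = x * y + 1) :
    ∀ s : ℕ, y * x ^ s = x ^ s * y + s • x ^ (s - 1) := by
  intro s
  induction s with
  | zero => simp
  | succ n ih =>
    rw [pow_succ, ← mul_assoc, ih, add_mul, mul_assoc, h, mul_add, mul_one, Nat.succ_sub_one,
      smul_mul_assoc, succ_nsmul]
    cases n with
    | zero => simp
    | succ m =>
      rw [Nat.succ_sub_one, ← pow_succ]
      rw [mul_assoc]
      abel

private lemma coeff9 (r s e : ℕ) :
    r.choose (e+1) * s.choose (e+1) * (e+1).factorial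
      + r.choose e * s.choose e * e.factorial * (s - e)
    = (r+1).choose (e+1) * s.choose (e+1) * (e+1).factorial := by
  have h1 : s.choose (e+1) * (e+1).factorial = s.choose e * (s - e) * e.factorial := by
    rw [Nat.factorial_succ, ← mul_assoc, Nat.choose_succ_right_eq]
  have h2 : r.choose e * s.choose e * e.factorial * (s - e)
      = r.choose e * (s.choose (e+1) * (e+1).factorial) := by rw [h1]; ring
  rw [h2, Nat.choose_succ_succ]
  ring

private lemma aux9 {R : Type} [Ring R] (x y : R) (h : y * x = x * y + 1) (s : ℕ) :
    ∀ r : ℕ, y ^ r * x ^ s =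
      ∑ e ∈ Finset.range (r + 1),
        (r.choose e * s.choose e * e.factorial) • (x ^ (s - e) * y ^ (r - e)) := by
  intro r
  induction r with
  | zero => simp
  | succ r ih =>
    have step : ∀ e ∈ Finset.range (r+1),
        y * ((r.choose e * s.choose e * e.factorial) • (x ^ (s - e) * y ^ (r - e)))
        = (r.choose e * s.choose e * e.factorial) • (x ^ (s - e) * y ^ (r + 1 - e))
          + ((r.choose e * s.choose e * e.factorial) * (s - e)) •
              (x ^ (s - e - 1) * y ^ (r - e)) := by
      intro e he
      rw [Finset.mem_range] at he
      have hre : r - e + 1 = r + 1 - e := by omega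
      rw [mul_smul_comm, ← mul_assoc, key9 x y h, add_mul, smul_mul_assoc,
        mul_assoc (x ^ (s - e)), ← pow_succ', hre, smul_add, smul_smul]
    rw [pow_succ', mul_assoc, ih, Finset.mul_sum, Finset.sum_congr rfl step,
      Finset.sum_add_distrib]
    have hS1 : ∑ e ∈ Finset.range (r+1),
        (r.choose e * s.choose e * e.factorial) • (x ^ (s - e) * y ^ (r + 1 - e))
        = ∑ e ∈ Finset.range (r+2),
        (r.choose e * s.choose e * e.factorial) • (x ^ (s - e) * y ^ (r + 1 - e)) := by
      rw [Finset.sum_range_succ _ (r+1), Nat.choose_succ_self]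
      simp
    rw [hS1, Finset.sum_range_succ' _ (r+1), Finset.sum_range_succ' (fun e =>
      ((r+1).choose e * s.choose e * e.factorial) • (x ^ (s - e) * y ^ (r + 1 - e))) (r+1)]
    simp only [Nat.choose_zero_right, Nat.factorial_zero, Nat.sub_zero, mul_one, one_mul,
      one_smul]
    rw [add_right_comm]
    congr 1
    rw [← Finset.sum_add_distrib]
    apply Finset.sum_congr rfl
    intro e he
    have h1 : s - (e + 1) = s - e - 1 := by omega
    have h2 : r + 1 - (e + 1) = r - e := by omega
    rw [h1, h2, ← add_smul, coeff9]



/-- the normal-ordering identity in the Weyl algebra.  If `x, y` are elements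
of a (not necessarily commutative) ring with `y·x = x·y + 1`, then for all naturals `r, s`:
`y^r · x^s = ∑_{e=0}^{min(r,s)} C(r,e)·C(s,e)·e! · x^{s-e} · y^{r-e}`. -/
theorem statement9 {R : Type} [Ring R] (x y : R) (h : y * x = x * y + 1) (r s : ℕ) :
    y ^ r * x ^ s =
      ∑ e ∈ Finset.range (min r s + 1),
        (r.choose e * s.choose e * e.factorial) • (x ^ (s - e) * y ^ (r - e)) := by
  rw [aux9 x y h s r]
  refine (Finset.sum_subset (Finset.range_subset_range.2 (by omega)) ?_).symm
  intro e he hne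
  rw [Finset.mem_range] at he hne
  have : s < e := by omega
  rw [Nat.choose_eq_zero_of_lt this]
  simp
end

section
/- Let R be a (not necessarily commutative) ring, n ∈ ℕ, and x, y : Fin n → R families of elements satisfying: x_i x_j = x_j x_i and y_i y_j = y_j y_i for all i,j; y_i x_j = x_j y_i for i ≠ j; and y_i x_i = x_i y_i + 1 for all i. For a multi-index α : Fin n → ℕ write x^α = Π_i x_i^{α_i} and y^α = Π_i y_i^{α_i} (well-defined since the x_i commute and the y_i commute), C(α,ε) = Π_i C(α_i,ε_i), and ε! = Π_i (ε_i)!. Then for all multi-indices α, σ, β, τ : Fin n → ℕ: x^α y^σ · x^β y^τ − x^β y^τ · x^α y^σ = Σ_ε ( C(β,ε)C(σ,ε) − C(α,ε)C(τ,ε) ) · ε! · x^{α+β−ε} y^{σ+τ−ε}, where the sum is over all ε : Fin n → ℕ (only finitely many terms are nonzero, since C(β,ε)C(σ,ε) = 0 unless ε ≤ β and ε ≤ σ componentwise, and C(α,ε)C(τ,ε) = 0 unless ε ≤ α and ε ≤ τ componentwise; in particular the exponents α+β−ε and σ+τ−ε are componentwise non-negative in every nonzero term). -/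
/-!
For a single pair with `v u = u v + 1` one has `v uᵐ = uᵐ v + m uᵐ⁻¹`, and Pascal's rule then
gives the normal ordering `vˢ uᵇ = ∑ₑ C(s,e) b(b-1)⋯(b-e+1) uᵇ⁻ᵉ vˢ⁻ᵉ` by induction on `s`;
the falling factorial is `e! C(b,e)`.
Generators with distinct indices commute, so the normal ordering of `y^σ x^β` is the product of
the one-variable ones (induction on `n`). Multiplying by `x^α` on the left and `y^τ` on the right
normal-orders `x^α y^σ x^β y^τ`; its coefficients vanish unless `ε ≤ β ⊓ σ`, so both products
in the commutator can be summed over one common box and subtracted termwise.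
-/

/-- The ordered monomial `z^α = z₀^{α₀} ⋯ z_{n-1}^{α_{n-1}}` in a (not necessarily
commutative) ring; for a commuting family this is the monomial `z^α`. -/
def orderedPow {R : Type} [Ring R] {n : ℕ} (z : Fin n → R) (α : Fin n → ℕ) : R :=
  ((List.finRange n).map (fun i => z i ^ α i)).prod

open Finset

section Weyl
variable {R : Type*} [Semiring R] {u v : R}

theorem weyl_mul_pow (h : v * u = u * v + 1) (m : ℕ) :
    v * u ^ m = u ^ m * v + m • u ^ (m - 1) := by
  induction m with
  | zero => simp
  | succ m ih =>
    have hu : m • u ^ (m - 1) * u = m • u ^ m := by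
      cases m with
      | zero => simp
      | succ k => rw [smul_mul_assoc, Nat.add_sub_cancel, ← pow_succ]
    rw [pow_succ, ← mul_assoc, ih, add_mul, mul_assoc, h, mul_add, mul_one, hu,
      ← mul_assoc, ← pow_succ, Nat.add_sub_cancel, succ_nsmul, add_assoc, add_comm (u ^ m)]

theorem weyl_mul_pow_mul_pow (h : v * u = u * v + 1) (b e k : ℕ) :
    v * (b.descFactorial e • (u ^ (b - e) * v ^ k)) =
      b.descFactorial e • (u ^ (b - e) * v ^ (k + 1)) +
        b.descFactorial (e + 1) • (u ^ (b - (e + 1)) * v ^ k) := by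
  rw [mul_smul_comm, ← mul_assoc, weyl_mul_pow h, add_mul, smul_add, mul_assoc, ← pow_succ',
    smul_mul_assoc, smul_smul, Nat.descFactorial_succ, mul_comm (b - e), Nat.sub_sub]

theorem weyl_pow_mul_pow (h : v * u = u * v + 1) (s b : ℕ) :
    v ^ s * u ^ b = ∑ e ∈ range (s + 1),
      (s.choose e * b.descFactorial e) • (u ^ (b - e) * v ^ (s - e)) := by
  induction s with
  | zero => simp
  | succ s ih =>
    simp only [mul_smul]
    rw [sum_choose_succ_nsmul (fun e k => b.descFactorial e • (u ^ (b - e) * v ^ k)),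
      ← sum_add_distrib, pow_succ', mul_assoc, ih, mul_sum]
    refine sum_congr rfl fun e he => ?_
    have he : e ≤ s := Nat.lt_succ_iff.mp (mem_range.mp he)
    rw [mul_smul, mul_smul_comm, weyl_mul_pow_mul_pow h, smul_add, Nat.sub_add_comm he]

end Weyl

theorem Finset.sum_Icc_eq_sum_Icc_of_le {α M : Type*} [Preorder α] [LocallyFiniteOrder α]
    [AddCommMonoid M] {f : α → M} {a k m : α} (hkm : k ≤ m) (hf : ∀ ε, ¬ ε ≤ k → f ε = 0) :
    ∑ ε ∈ Icc a m, f ε = ∑ ε ∈ Icc a k, f ε :=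
  (sum_subset (Icc_subset_Icc le_rfl hkm) fun ε hε hεk =>
    hf ε fun hle => hεk (mem_Icc.2 ⟨(mem_Icc.1 hε).1, hle⟩)).symm

theorem Finset.sum_Icc_fin_succ {α M : Type*} [PartialOrder α] [LocallyFiniteOrder α]
    [DecidableEq α] [AddCommMonoid M] {n : ℕ} (a b : Fin (n + 1) → α)
    (f : (Fin (n + 1) → α) → M) :
    ∑ ε ∈ Icc a b, f ε =
      ∑ e ∈ Icc (a 0) (b 0), ∑ ε ∈ Icc (Fin.tail a) (Fin.tail b), f (Fin.cons e ε) := by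
  have h := filter_piFinset_eq_map_consEquiv (fun i => Icc (a i) (b i)) (fun _ => True)
  simp only [filter_true] at h
  rw [Pi.Icc_eq, Pi.Icc_eq, h, sum_map, sum_product]
  rfl

section OrderedPow
variable {R : Type} [Ring R] {n : ℕ}

theorem orderedPow_succ (z : Fin (n + 1) → R) (α : Fin (n + 1) → ℕ) :
    orderedPow z α = z 0 ^ α 0 * orderedPow (Fin.tail z) (Fin.tail α) := by
  simp [orderedPow, List.finRange_succ, Function.comp_def, Fin.tail]

theorem Commute.orderedPow_right {a : R} {z : Fin n → R} (h : ∀ i, Commute a (z i))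
    (α : Fin n → ℕ) : Commute a (orderedPow z α) :=
  Commute.list_prod_right _ _ fun _ hb => by
    obtain ⟨i, -, rfl⟩ := List.mem_map.mp hb
    exact (h i).pow_right _

theorem orderedPow_add {z : Fin n → R} (h : ∀ i j, Commute (z i) (z j)) (α β : Fin n → ℕ) :
    orderedPow z (α + β) = orderedPow z α * orderedPow z β := by
  induction n with
  | zero => simp [orderedPow]
  | succ n ih =>
    have hcomm : Commute (orderedPow (Fin.tail z) (Fin.tail α)) (z 0 ^ β 0) :=
      (Commute.orderedPow_right (fun i => ((h _ _).pow_left _)) _).symm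
    rw [orderedPow_succ, orderedPow_succ z α, orderedPow_succ z β, Pi.add_apply, pow_add,
      hcomm.mul_mul_mul_comm, ← ih (z := Fin.tail z) (fun _ _ => h _ _)]
    rfl

end OrderedPow

def normalOrderCoeff {ι : Type*} [Fintype ι] (σ β ε : ι → ℕ) : ℕ :=
  ∏ i, (σ i).choose (ε i) * (β i).descFactorial (ε i)

theorem normalOrderCoeff_cons {n : ℕ} (σ β : Fin (n + 1) → ℕ) (e : ℕ) (ε : Fin n → ℕ) :
    normalOrderCoeff σ β (Fin.cons e ε) =
      (σ 0).choose e * (β 0).descFactorial e *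
        normalOrderCoeff (Fin.tail σ) (Fin.tail β) ε := by
  simp [normalOrderCoeff, Fin.prod_univ_succ, Fin.tail]

theorem normalOrderCoeff_eq_zero {ι : Type*} [Fintype ι] {σ β ε : ι → ℕ} (h : ¬ε ≤ β ⊓ σ) :
    normalOrderCoeff σ β ε = 0 := by
  obtain ⟨i, hi⟩ : ∃ i, β i < ε i ∨ σ i < ε i := by
    by_contra! hle
    exact h fun i => le_inf (hle i).1 (hle i).2
  refine prod_eq_zero (mem_univ i) ?_
  rcases hi with hβ | hσ
  · rw [Nat.descFactorial_eq_zero_iff_lt.mpr hβ, mul_zero]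
  · rw [Nat.choose_eq_zero_of_lt hσ, zero_mul]

theorem normalOrderCoeff_eq {ι : Type*} [Fintype ι] (σ β ε : ι → ℕ) :
    normalOrderCoeff σ β ε =
      (∏ i, (σ i).choose (ε i)) * (∏ i, (β i).choose (ε i)) * ∏ i, (ε i).factorial := by
  simp only [normalOrderCoeff, Nat.descFactorial_eq_factorial_mul_choose, ← prod_mul_distrib]
  exact prod_congr rfl fun i _ => by ring

section WeylFamily
variable {R : Type} [Ring R]

theorem orderedPow_mul_orderedPow_eq_sum {n : ℕ} {x y : Fin n → R}
    (hyx : ∀ i j, i ≠ j → Commute (y i) (x j)) (hyx' : ∀ i, y i * x i = x i * y i + 1)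
    (σ β : Fin n → ℕ) :
    orderedPow y σ * orderedPow x β = ∑ ε ∈ Icc 0 σ,
      normalOrderCoeff σ β ε • (orderedPow x (β - ε) * orderedPow y (σ - ε)) := by
  induction n with
  | zero => simp [orderedPow, normalOrderCoeff, Subsingleton.elim σ 0]
  | succ n ih =>
    have h_tail := ih (x := Fin.tail x) (y := Fin.tail y)
      (fun i j hij => hyx _ _ ((Fin.succ_injective _).ne hij)) (fun i => hyx' i.succ)
    have hy_tail : Commute (orderedPow (Fin.tail y) (Fin.tail σ)) (x 0 ^ β 0) :=
      (Commute.orderedPow_right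
        (fun i => (hyx i.succ 0 (Fin.succ_ne_zero i)).symm.pow_left _) _).symm
    rw [orderedPow_succ y, orderedPow_succ x, hy_tail.mul_mul_mul_comm,
      weyl_pow_mul_pow (hyx' 0), h_tail, sum_mul_sum, sum_Icc_fin_succ,
      Nat.range_succ_eq_Icc_zero]
    refine sum_congr rfl fun e _ => sum_congr rfl fun ε _ => ?_
    have hy0 : Commute (y 0 ^ (σ 0 - e)) (orderedPow (Fin.tail x) (Fin.tail β - ε)) :=
      Commute.orderedPow_right (fun i => (hyx 0 i.succ (Fin.succ_ne_zero i).symm).pow_left _) _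
    rw [smul_mul_smul, normalOrderCoeff_cons, orderedPow_succ x, orderedPow_succ y,
      hy0.mul_mul_mul_comm]
    rfl

theorem orderedPow_mul_mul_eq_sum {n : ℕ} {x y : Fin n → R}
    (hxx : ∀ i j, Commute (x i) (x j)) (hyy : ∀ i j, Commute (y i) (y j))
    (hyx : ∀ i j, i ≠ j → Commute (y i) (x j)) (hyx' : ∀ i, y i * x i = x i * y i + 1)
    (α σ β τ : Fin n → ℕ) {m : Fin n → ℕ} (hm : β ⊓ σ ≤ m) :
    orderedPow x α * orderedPow y σ * (orderedPow x β * orderedPow y τ) = ∑ ε ∈ Icc 0 m,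
      normalOrderCoeff σ β ε • (orderedPow x (α + β - ε) * orderedPow y (σ + τ - ε)) := by
  have hvanish : ∀ ε, ¬ε ≤ β ⊓ σ → ∀ a : R, normalOrderCoeff σ β ε • a = 0 :=
    fun ε hε a => by rw [normalOrderCoeff_eq_zero hε, zero_smul]
  calc orderedPow x α * orderedPow y σ * (orderedPow x β * orderedPow y τ)
      = orderedPow x α * (orderedPow y σ * orderedPow x β) * orderedPow y τ := by
        simp only [mul_assoc]
    _ = ∑ ε ∈ Icc 0 σ, normalOrderCoeff σ β ε •
          (orderedPow x α * (orderedPow x (β - ε) * orderedPow y (σ - ε)) * orderedPow y τ) := by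
        simp only [orderedPow_mul_orderedPow_eq_sum hyx hyx', mul_sum, sum_mul, mul_smul_comm,
          smul_mul_assoc]
    _ = ∑ ε ∈ Icc 0 (β ⊓ σ), normalOrderCoeff σ β ε •
          (orderedPow x α * (orderedPow x (β - ε) * orderedPow y (σ - ε)) * orderedPow y τ) :=
        sum_Icc_eq_sum_Icc_of_le inf_le_right fun ε hε => hvanish ε hε _
    _ = ∑ ε ∈ Icc 0 (β ⊓ σ), normalOrderCoeff σ β ε •
          (orderedPow x (α + β - ε) * orderedPow y (σ + τ - ε)) := by
        refine sum_congr rfl fun ε hε => ?_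
        have hε := (mem_Icc.mp hε).2
        rw [add_tsub_assoc_of_le (hε.trans inf_le_left),
          ← tsub_add_eq_add_tsub (hε.trans inf_le_right), orderedPow_add hxx, orderedPow_add hyy]
        simp only [mul_assoc]
    _ = _ := (sum_Icc_eq_sum_Icc_of_le hm fun ε hε => hvanish ε hε _).symm

end WeylFamily

/-- the commutator formula for normally ordered monomials in the Weyl
algebra.  Let `x, y : Fin n → R` be families of elements of a ring `R` such that the `xᵢ`
commute, the `yᵢ` commute, `yᵢ xⱼ = xⱼ yᵢ` for `i ≠ j`, and `yᵢ xᵢ = xᵢ yᵢ + 1`.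
Writing `x^α = ∏ᵢ xᵢ^{αᵢ}` (well defined as the `xᵢ` commute) etc., for all multi-indices
`α σ β τ`:
`x^α y^σ · x^β y^τ − x^β y^τ · x^α y^σ
  = ∑_ε (C(β,ε)C(σ,ε) − C(α,ε)C(τ,ε)) · ε! · x^{α+β−ε} y^{σ+τ−ε}`,
the sum being over all `ε` (every `ε` outside `Finset.Icc 0 ((β ⊓ σ) ⊔ (α ⊓ τ))`
contributes zero since its integer coefficient vanishes). -/
theorem statement10 {R : Type} [Ring R] (n : ℕ) (x y : Fin n → R)
    (hxx : ∀ i j, x i * x j = x j * x i) (hyy : ∀ i j, y i * y j = y j * y i)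
    (hyx : ∀ i j, i ≠ j → y i * x j = x j * y i)
    (hyx' : ∀ i, y i * x i = x i * y i + 1)
    (α σ β τ : Fin n → ℕ) :
    orderedPow x α * orderedPow y σ * (orderedPow x β * orderedPow y τ) -
        orderedPow x β * orderedPow y τ * (orderedPow x α * orderedPow y σ) =
      ∑ ε ∈ Finset.Icc (0 : Fin n → ℕ) ((β ⊓ σ) ⊔ (α ⊓ τ)),
        ((((∏ i, (β i).choose (ε i) : ℕ) * (∏ i, (σ i).choose (ε i)) : ℤ) -
            ((∏ i, (α i).choose (ε i) : ℕ) * (∏ i, (τ i).choose (ε i)) : ℤ)) *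
              ((∏ i, (ε i).factorial : ℕ) : ℤ)) •
          (orderedPow x (α + β - ε) * orderedPow y (σ + τ - ε)) := by
  rw [orderedPow_mul_mul_eq_sum hxx hyy hyx hyx' α σ β τ le_sup_left,
    orderedPow_mul_mul_eq_sum hxx hyy hyx hyx' β τ α σ le_sup_right, ← sum_sub_distrib]
  refine sum_congr rfl fun ε _ => ?_
  rw [add_comm β α, add_comm τ σ, ← natCast_zsmul, ← natCast_zsmul, ← sub_smul,
    normalOrderCoeff_eq, normalOrderCoeff_eq]
  congr 1
  push_cast
  ring
end
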